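/- Auxiliary sum bounds: assume the deterministic degree bounds D_0(a,a) ≥ c max{n θ̄ θ_a, n θ̄²} for all a, and the incoherence bounds |ξ_k(a)| ≤ sqrt(μ_a/n) with μ_a = C θ_a²/(θ̄ (θ̄ ∨ θ_a)). Then, up to constants depending only on the model constants: (i) |D_0(a,a)^{−3/2} ξ_k(a)| ≲ 1/(n² θ̄² (θ̄ ∨ θ_a)) for all a; (ii) Σ_{a≠i} μ_a θ_a D_0(a,a)^{−1} ≲ sqrt(log n)/θ̄; (iii) Σ_{a=1}^n ξ_k(a) D_0(a,a)^{−3/2} ≲ 1/(n θ̄³); (iv) Σ_{a=1}^n sqrt(μ_a θ_a²/(θ̄ ∧ θ_a)) ≲ n sqrt(θ_max³/θ̄²); (v) Σ_{a=1}^n θ_a sqrt(μ_a/(θ̄ ∨ θ_a)) ≲ n sqrt(θ̄). -/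

import Mathlib

/-!
All five bounds are termwise. Writing `m_a = θ̄ ∨ θ_a`, the two hypotheses read
`D₀(a,a) ≳ n θ̄ m_a` and `ξ_k(a)² ≤ μ_a / n`, and the one estimate used throughout is
`μ_a ≤ C m_a / θ̄`, i.e. `θ_a² ≤ m_a²`; summing `θ_a` then gives `n θ̄`. In (iv) the identity
`(θ̄ ∧ θ_a)(θ̄ ∨ θ_a) = θ̄ θ_a` makes the summand exactly `C θ_a³ / θ̄²`. The sum in (ii) is in
fact `≲ 1/θ̄`; the factor `√(log n)` costs only a constant once the sum is nonempty (`n ≥ 2`).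
-/

noncomputable section

open Matrix MeasureTheory Filter Finset Asymptotics
open scoped BigOperators Topology

namespace DCMM

/-- Euclidean dot product on `Fin m → ℝ`. -/
def dot {m : ℕ} (v w : Fin m → ℝ) : ℝ := ∑ x, v x * w x

/-- Squared Euclidean norm. -/
def sqnorm {m : ℕ} (v : Fin m → ℝ) : ℝ := ∑ x, v x ^ 2

/-- Euclidean norm. -/
def enorm {m : ℕ} (v : Fin m → ℝ) : ℝ := Real.sqrt (sqnorm v)

/-- Supremum (ℓ^∞) norm. -/
def supNorm {m : ℕ} (v : Fin m → ℝ) : ℝ := ⨆ x, |v x|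

/-- Operator (spectral) norm of a real matrix. -/
def opNorm {m k : ℕ} (A : Matrix (Fin m) (Fin k) ℝ) : ℝ :=
  sSup ((fun v => enorm (A.mulVec v)) '' {v | sqnorm v ≤ 1})

/-- The regularized degree `(e_i + n⁻¹ 1_n)ᵀ A 1_n`. -/
def degOf {n : ℕ} (A : Matrix (Fin n) (Fin n) ℝ) (i : Fin n) : ℝ :=
  (∑ j, A i j) + (1 / (n : ℝ)) * ∑ k, ∑ j, A k j

/-- The regularized graph Laplacian `D^{-1/2} A D^{-1/2}`. -/
def laplOf {n : ℕ} (A : Matrix (Fin n) (Fin n) ℝ) : Matrix (Fin n) (Fin n) ℝ :=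
  Matrix.diagonal (fun i => (Real.sqrt (degOf A i))⁻¹) * A *
    Matrix.diagonal (fun i => (Real.sqrt (degOf A i))⁻¹)

/-- A degree–corrected mixed membership (DCMM) model with `n` nodes and `K` communities. -/
structure Model (n K : ℕ) where
  θ : Fin n → ℝ
  Pi : Matrix (Fin n) (Fin K) ℝ
  P : Matrix (Fin K) (Fin K) ℝ
  θ_pos : ∀ i, 0 < θ i
  Pi_nonneg : ∀ i k, 0 ≤ Pi i k
  Pi_rowsum : ∀ i, ∑ k, Pi i k = 1
  P_symm : P.IsSymm
  P_nonneg : ∀ a b, 0 ≤ P a b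
  P_unitdiag : ∀ a, P a a = 1
  P_nonsing : IsUnit P.det
  H_nonneg : ∀ i j, 0 ≤ (Matrix.diagonal θ * Pi * P * Piᵀ * Matrix.diagonal θ) i j
  H_le_one : ∀ i j, (Matrix.diagonal θ * Pi * P * Piᵀ * Matrix.diagonal θ) i j ≤ 1

namespace Model

variable {n K : ℕ} (M : Model n K)

/-- The edge probability matrix `H = Θ Π P Πᵀ Θ`. -/
def H : Matrix (Fin n) (Fin n) ℝ :=
  Matrix.diagonal M.θ * M.Pi * M.P * M.Piᵀ * Matrix.diagonal M.θ

/-- Average degree parameter. -/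
def θbar : ℝ := (∑ i, M.θ i) / n

def θmax : ℝ := ⨆ i, M.θ i

def θmin : ℝ := ⨅ i, M.θ i

/-- The population regularized degrees `D₀(i,i)`. -/
def deg : Fin n → ℝ := degOf M.H

/-- The population regularized Laplacian `L₀`. -/
def L0 : Matrix (Fin n) (Fin n) ℝ := laplOf M.H

/-- Node `i` is a pure node of community `k`. -/
def pure (i : Fin n) (k : Fin K) : Prop := ∀ l, M.Pi i l = if l = k then 1 else 0

/-- `θ_{k,min}`: the smallest degree parameter among pure nodes of community `k`. -/
def θpureMin (k : Fin K) : ℝ := sInf {x | ∃ i, M.pure i k ∧ x = M.θ i}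

/-- The community balance matrix `G = K Πᵀ Θ D₀⁻¹ Θ Π`. -/
def G : Matrix (Fin K) (Fin K) ℝ :=
  (K : ℝ) • (M.Piᵀ * Matrix.diagonal M.θ * Matrix.diagonal (fun i => (M.deg i)⁻¹) *
    Matrix.diagonal M.θ * M.Pi)

/-- The balance matrix `F = K ‖θ‖⁻² Πᵀ Θ² Π`. -/
def F : Matrix (Fin K) (Fin K) ℝ :=
  ((K : ℝ) / (∑ i, M.θ i ^ 2)) • (M.Piᵀ * Matrix.diagonal M.θ * Matrix.diagonal M.θ * M.Pi)

end Model

/-- `lam`, `xi` is a system of unit eigenvalue/eigenvector pairs of `L`,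
ordered decreasingly in magnitude. -/
structure IsEigen {n K : ℕ} (L : Matrix (Fin n) (Fin n) ℝ)
    (lam : Fin K → ℝ) (xi : Fin K → Fin n → ℝ) : Prop where
  eig : ∀ k, L.mulVec (xi k) = lam k • xi k
  unit : ∀ k, sqnorm (xi k) = 1
  orth : ∀ k l, k ≠ l → dot (xi k) (xi l) = 0
  ordered : ∀ k l, k ≤ l → |lam l| ≤ |lam k|

/-- Assumptions 1 and 2 of the paper (the fixed-`n` parts), with constants `c1, …, c9`. -/
structure Assm {n K : ℕ} (M : Model n K) (lam : Fin K → ℝ) (xi : Fin K → Fin n → ℝ)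
    (lamPG eta1 : Fin K → ℝ) (c1 c2 c3 c4 c5 c6 c7 c8 c9 : ℝ) : Prop where
  eigen : IsEigen M.L0 lam xi
  xi1_pos : ∀ h0 : 0 < K, ∀ i, 0 < xi ⟨0, h0⟩ i
  pg_eigen : ∀ k, ∃ v : Fin K → ℝ, v ≠ 0 ∧ (M.P * M.G).mulVec v = lamPG k • v
  pg_ordered : ∀ k l : Fin K, k ≤ l → |lamPG l| ≤ |lamPG k|
  G_norm : opNorm M.G ≤ c1
  Ginv_norm : opNorm M.G⁻¹ ≤ c1
  balance : ∀ k, c1 * (∑ i, M.θ i) ≤ ∑ i, M.θ i * M.Pi i k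
  pg_gap : ∀ h0 : 0 < K, ∀ k, k ≠ (⟨0, h0⟩ : Fin K) →
    lamPG k ≤ min ((1 - c2) * lamPG ⟨0, h0⟩) (c2⁻¹ * Real.sqrt K)
  eta1_eig : ∀ h0 : 0 < K, (M.P * M.G).mulVec eta1 = lamPG ⟨0, h0⟩ • eta1
  eta1_pos : ∀ k, 0 < eta1 k
  eta1_bal : ∀ k l, c3 * eta1 l ≤ eta1 k
  pure_exists : ∀ k, ∃ i, M.pure i k
  lam_gap : ∀ k l, l ≠ k → c4 * |lam k| ≤ |lam k - lam l|
  lamK_large : ∀ h : K - 1 < K,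
    Real.sqrt (Real.log n / (n * M.θbar ^ 2)) ≤ lam ⟨K - 1, h⟩
  F_norm : opNorm M.F ≤ c5
  Finv_norm : opNorm M.F⁻¹ ≤ c6
  θ_low : ∀ i, c7 * Real.sqrt (Real.log n / n) ≤ M.θ i
  θ_up : ∀ i, M.θ i ≤ c8
  P_max : ∀ a b, M.P a b ≤ c9

/-- `X` is a random adjacency matrix generated from the DCMM model `M`:
symmetric, Bernoulli entries with success probabilities `H i j`,
independent on and above the diagonal. -/
structure IsAdj {n K : ℕ} (M : Model n K) {Ω : Type} [MeasurableSpace Ω]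
    (μ : Measure Ω) (X : Ω → Matrix (Fin n) (Fin n) ℝ) : Prop where
  meas : ∀ i j, Measurable fun ω => X ω i j
  symm : ∀ ω, (X ω).IsSymm
  zero_one : ∀ ω i j, X ω i j = 0 ∨ X ω i j = 1
  bern : ∀ i j, μ {ω | X ω i j = 1} = ENNReal.ofReal (M.H i j)
  indep : ProbabilityTheory.iIndepFun (m := fun _ => (inferInstance : MeasurableSpace ℝ))
    (fun (p : {p : Fin n × Fin n // p.1 ≤ p.2}) ω => X ω p.1.1 p.1.2) μ

/-- Entrywise eigenvector ratios `r_i = (ξ₂(i)/ξ₁(i), …, ξ_K(i)/ξ₁(i))`. -/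
def ratioOf {n K : ℕ} (xi : Fin K → Fin n → ℝ) (i : Fin n) (j : Fin (K - 1)) : ℝ :=
  xi ⟨(j : ℕ) + 1, by have := j.isLt; omega⟩ i / xi ⟨0, by have := j.isLt; omega⟩ i

/-- A run of the modified successive projection vertex-hunting algorithm (Algorithm 2)
on inputs `rhat` with radius `φ`. -/
structure SPRun {n K : ℕ} (rhat : Fin n → Fin (K - 1) → ℝ) (φ : ℝ) where
  Z : Fin (K + 1) → Fin n → Fin K → ℝ
  isel : Fin K → Fin n
  Chat : Fin K → Finset (Fin n)
  vhat : Fin K → Fin (K - 1) → ℝ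
  Z_init : ∀ i (j : Fin K), Z 0 i j =
    if _ : (j : ℕ) = 0 then 1 else rhat i ⟨(j : ℕ) - 1, by have := j.isLt; omega⟩
  isel_max : ∀ (k : Fin K) (i : Fin n),
    enorm (Z k.castSucc i) ≤ enorm (Z k.castSucc (isel k))
  Z_update : ∀ (k : Fin K) (i : Fin n) (j : Fin K),
    Z k.succ i j = Z k.castSucc i j -
      dot (Z k.castSucc (isel k)) (Z k.castSucc i) / sqnorm (Z k.castSucc (isel k)) *
        Z k.castSucc (isel k) j
  Chat_mem : ∀ (k : Fin K) (i : Fin n),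
    i ∈ Chat k ↔ enorm (fun j => rhat i j - rhat (isel k) j) ≤ φ
  vhat_def : ∀ (k : Fin K) (j : Fin (K - 1)),
    vhat k j = (∑ i ∈ Chat k, rhat i j) / (Chat k).card

/-- `b̂₁(k) = (λ̂₁ + v̂_kᵀ Λ̂₋₁ v̂_k)^{-1/2}`. -/
def b1Of {K : ℕ} (hK : 0 < K) (lam : Fin K → ℝ) (v : Fin (K - 1) → ℝ) : ℝ :=
  (Real.sqrt (lam ⟨0, hK⟩ +
    ∑ j : Fin (K - 1), lam ⟨(j : ℕ) + 1, by have := j.isLt; omega⟩ * v j ^ 2))⁻¹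

/-- The matrix `Q̂` whose `k`-th row is `(1, v̂_kᵀ)`. -/
def QhatOf {K : ℕ} (vhat : Fin K → Fin (K - 1) → ℝ) : Matrix (Fin K) (Fin K) ℝ :=
  fun k j => if _ : (j : ℕ) = 0 then 1 else vhat k ⟨(j : ℕ) - 1, by have := j.isLt; omega⟩

/-- The estimator `P̂ = diag(b̂₁) Q̂ Λ̂ Q̂ᵀ diag(b̂₁)` of Algorithm 1. -/
def PhatOf {K : ℕ} (hK : 0 < K) (lamHat : Fin K → ℝ) (vhat : Fin K → Fin (K - 1) → ℝ) :
    Matrix (Fin K) (Fin K) ℝ :=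
  fun a b => b1Of hK lamHat (vhat a) *
    (∑ k, QhatOf vhat a k * lamHat k * QhatOf vhat b k) * b1Of hK lamHat (vhat b)

/-- The membership estimate `π̂_i` of Algorithm 1, built from the barycentric
coordinates `what` of the embedded nodes. -/
def piHatOf {n K : ℕ} (hK : 0 < K) (lamHat : Fin K → ℝ) (vhat : Fin K → Fin (K - 1) → ℝ)
    (what : Fin n → Fin K → ℝ) (i : Fin n) (k : Fin K) : ℝ :=
  max (what i k / b1Of hK lamHat (vhat k)) 0 /
    ∑ l, max (what i l / b1Of hK lamHat (vhat l)) 0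

/-- The estimator `Θ̂(i,i) = ξ̂₁(i) D̂(i,i)^{1/2} (π̂_iᵀ b̂₁)⁻¹` of Algorithm 1. -/
def thetaHatOf {n K : ℕ} (hK : 0 < K) (A : Matrix (Fin n) (Fin n) ℝ)
    (lamHat : Fin K → ℝ) (xiHat : Fin K → Fin n → ℝ) (vhat : Fin K → Fin (K - 1) → ℝ)
    (what : Fin n → Fin K → ℝ) (i : Fin n) : ℝ :=
  xiHat ⟨0, hK⟩ i * Real.sqrt (degOf A i) *
    (∑ k, piHatOf hK lamHat vhat what i k * b1Of hK lamHat (vhat k))⁻¹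

/-- `Δ_r`: the minimal separation between a non-pure node embedding and a vertex. -/
def DeltaR {n K : ℕ} (M : Model n K) (xi : Fin K → Fin n → ℝ)
    (v : Fin K → Fin (K - 1) → ℝ) : ℝ :=
  sInf {x | ∃ k i, ¬ M.pure i k ∧ x = enorm (fun j => ratioOf xi i j - v k j)}

/-- `ν_n = min{K^{-1/2} λ₁, λ_K}`. -/
def nuOf {K : ℕ} (hK : 0 < K) (lam : Fin K → ℝ) : ℝ :=
  min (lam ⟨0, hK⟩ / Real.sqrt K) (lam ⟨K - 1, by omega⟩)

/-- Index type of the (weakly) upper triangular entries of an `n × n` matrix. -/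
def upperPairs (n : ℕ) : Type := {p : Fin n × Fin n // p.1 ≤ p.2}

instance (n : ℕ) : Fintype (upperPairs n) := by unfold upperPairs; infer_instance
instance (n : ℕ) : DecidableEq (upperPairs n) := by unfold upperPairs; infer_instance

/-- The symmetric 0/1 matrix determined by a selection of upper-triangular entries. -/
def matOfSel {n : ℕ} (s : upperPairs n → Bool) : Matrix (Fin n) (Fin n) ℝ :=
  fun i j => if h : i ≤ j then (if s ⟨(i, j), h⟩ then 1 else 0)
    else (if s ⟨(j, i), le_of_not_ge h⟩ then 1 else 0)

/-- The probability that the DCMM adjacency matrix equals `matOfSel s`. -/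
def selProb {n K : ℕ} (M : Model n K) (s : upperPairs n → Bool) : ℝ :=
  ∏ p : upperPairs n, (if s p then M.H p.1.1 p.1.2 else 1 - M.H p.1.1 p.1.2)

/-- The risk `E |T(X) - target|` of the estimator `T` under the model `M`. -/
def risk {n K : ℕ} (M : Model n K) (T : Matrix (Fin n) (Fin n) ℝ → ℝ) (target : ℝ) : ℝ :=
  ∑ s : upperPairs n → Bool, selProb M s * |T (matOfSel s) - target|

/-- The noise matrix `W = X - H`. -/
def Wof {n K : ℕ} (M : Model n K) (A : Matrix (Fin n) (Fin n) ℝ) :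
    Matrix (Fin n) (Fin n) ℝ := A - M.H

/-- `Σ_j W_{ij} + n⁻¹ Σ_l Σ_m W_{lm}`. -/
def wsum {n K : ℕ} (M : Model n K) (A : Matrix (Fin n) (Fin n) ℝ) (i : Fin n) : ℝ :=
  (∑ j, Wof M A i j) + (1 / (n : ℝ)) * ∑ l, ∑ m, Wof M A l m

/-- First-order term of the Taylor expansion of `D̂^{-1/2}`. -/
def Delta1 {n K : ℕ} (M : Model n K) (A : Matrix (Fin n) (Fin n) ℝ) :
    Matrix (Fin n) (Fin n) ℝ :=
  Matrix.diagonal fun i => -(1 / 2) * wsum M A i / Real.sqrt (M.deg i) ^ 3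

/-- Second-order term of the Taylor expansion of `D̂^{-1/2}`. -/
def Delta2 {n K : ℕ} (M : Model n K) (A : Matrix (Fin n) (Fin n) ℝ) :
    Matrix (Fin n) (Fin n) ℝ :=
  Matrix.diagonal fun i => (3 / 4) * wsum M A i ^ 2 / Real.sqrt (M.deg i) ^ 5

/-- `D₀^{-1/2}` as a diagonal matrix. -/
def Dhalfinv {n K : ℕ} (M : Model n K) : Matrix (Fin n) (Fin n) ℝ :=
  Matrix.diagonal fun i => (Real.sqrt (M.deg i))⁻¹

/-- The Laplacian noise `E = L̂ - L₀`. -/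
def Emat {n K : ℕ} (M : Model n K) (A : Matrix (Fin n) (Fin n) ℝ) :
    Matrix (Fin n) (Fin n) ℝ := laplOf A - M.L0

/-- The first-order expansion `E₁` of the Laplacian noise. -/
def E1mat {n K : ℕ} (M : Model n K) (A : Matrix (Fin n) (Fin n) ℝ) :
    Matrix (Fin n) (Fin n) ℝ :=
  Dhalfinv M * Wof M A * Dhalfinv M + Delta1 M A * M.H * Dhalfinv M +
    Dhalfinv M * M.H * Delta1 M A

/-- The second-order expansion `E₂` of the Laplacian noise. -/
def E2mat {n K : ℕ} (M : Model n K) (A : Matrix (Fin n) (Fin n) ℝ) :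
    Matrix (Fin n) (Fin n) ℝ :=
  Delta2 M A * M.H * Dhalfinv M + Delta1 M A * Wof M A * Dhalfinv M +
    Delta1 M A * M.H * Delta1 M A + Dhalfinv M * Wof M A * Delta1 M A +
    Dhalfinv M * M.H * Delta2 M A

namespace Model

variable {n K : ℕ} (M : Model n K)

def mu (C : ℝ) (a : Fin n) : ℝ := C * M.θ a ^ 2 / (M.θbar * max M.θbar (M.θ a))

theorem sum_θ_eq_mul_θbar : ∑ i, M.θ i = n * M.θbar := by
  rcases n.eq_zero_or_pos with rfl | hn
  · simp
  · exact (mul_div_cancel₀ _ (by positivity)).symm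

theorem θbar_nonneg : 0 ≤ M.θbar :=
  div_nonneg (Finset.sum_nonneg fun i _ => (M.θ_pos i).le) n.cast_nonneg

theorem θbar_pos (hn : 0 < n) : 0 < M.θbar :=
  div_pos (Finset.sum_pos (fun i _ => M.θ_pos i) ⟨⟨0, hn⟩, Finset.mem_univ _⟩) (by positivity)

theorem θ_le_θmax (a : Fin n) : M.θ a ≤ M.θmax :=
  le_ciSup (Set.finite_range M.θ).bddAbove a

theorem max_mul_le_deg_iff {cD : ℝ} (a : Fin n) :
    cD * max (n * M.θbar * M.θ a) (n * M.θbar ^ 2) ≤ M.deg a ↔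
      cD * (n * M.θbar * max M.θbar (M.θ a)) ≤ M.deg a := by
  rw [mul_max_of_nonneg _ _ (mul_nonneg n.cast_nonneg M.θbar_nonneg), max_comm]
  ring_nf

variable {M} {C cD : ℝ}

theorem deg_pos (hcD : 0 < cD)
    (hdeg : ∀ a, cD * (n * M.θbar * max M.θbar (M.θ a)) ≤ M.deg a) (a : Fin n) :
    0 < M.deg a := by
  have := M.θbar_pos a.pos
  have : (0 : ℝ) < n := Nat.cast_pos.mpr a.pos
  exact lt_of_lt_of_le (by positivity) (hdeg a)

theorem mu_nonneg (hC : 0 ≤ C) (a : Fin n) : 0 ≤ M.mu C a := by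
  have := M.θbar_nonneg
  unfold mu
  positivity

theorem mu_le (hC : 0 ≤ C) (hθbar : 0 < M.θbar) (a : Fin n) :
    M.mu C a ≤ C * max M.θbar (M.θ a) / M.θbar := by
  have hm : 0 < max M.θbar (M.θ a) := lt_max_of_lt_left hθbar
  rw [mu, div_le_div_iff₀ (by positivity) hθbar]
  have : M.θ a ^ 2 ≤ max M.θbar (M.θ a) ^ 2 :=
    pow_le_pow_left₀ (M.θ_pos a).le (le_max_right _ _) 2
  nlinarith [mul_le_mul_of_nonneg_left this (by positivity : 0 ≤ C * M.θbar)]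

theorem mu_mul_sq_div_min (hθbar : 0 < M.θbar) (a : Fin n) :
    M.mu C a * M.θ a ^ 2 / min M.θbar (M.θ a) = C * M.θ a ^ 3 / M.θbar ^ 2 := by
  calc M.mu C a * M.θ a ^ 2 / min M.θbar (M.θ a)
      = C * M.θ a ^ 4 / (M.θbar * (min M.θbar (M.θ a) * max M.θbar (M.θ a))) := by
        rw [mu]; ring
    _ = C * M.θ a ^ 3 / M.θbar ^ 2 := by
        rw [min_mul_max]; field_simp [(M.θ_pos a).ne']

end Model

section SumBounds

variable {n K : ℕ} {M : Model n K} {C cD : ℝ}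

theorem sum_sqrt_mu_mul_sq_div_min_le (hC : 0 ≤ C) :
    ∑ a, √(M.mu C a * M.θ a ^ 2 / min M.θbar (M.θ a)) ≤
      √C * n * √(M.θmax ^ 3 / M.θbar ^ 2) := by
  rcases n.eq_zero_or_pos with rfl | hn
  · simp
  have hθbar := M.θbar_pos hn
  calc ∑ a, √(M.mu C a * M.θ a ^ 2 / min M.θbar (M.θ a))
      ≤ ∑ _a : Fin n, √C * √(M.θmax ^ 3 / M.θbar ^ 2) := by
        refine Finset.sum_le_sum fun a _ => ?_
        rw [Model.mu_mul_sq_div_min hθbar, ← Real.sqrt_mul hC, mul_div_assoc]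
        have := M.θ_pos a
        gcongr
        exact M.θ_le_θmax a
    _ = √C * n * √(M.θmax ^ 3 / M.θbar ^ 2) := by
        simp only [sum_const, card_univ, Fintype.card_fin, nsmul_eq_mul]
        ring

theorem sum_θ_mul_sqrt_mu_div_max_le (hC : 0 ≤ C) :
    ∑ a, M.θ a * √(M.mu C a / max M.θbar (M.θ a)) ≤ √C * n * √M.θbar := by
  rcases n.eq_zero_or_pos with rfl | hn
  · simp
  have hθbar := M.θbar_pos hn
  calc ∑ a, M.θ a * √(M.mu C a / max M.θbar (M.θ a))
      ≤ ∑ a, √(C / M.θbar) * M.θ a := by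
        refine Finset.sum_le_sum fun a _ => ?_
        rw [mul_comm]
        have hm : 0 < max M.θbar (M.θ a) := lt_max_of_lt_left hθbar
        refine mul_le_mul_of_nonneg_right (Real.sqrt_le_sqrt ?_) (M.θ_pos a).le
        rw [div_le_iff₀ hm, div_mul_eq_mul_div]
        exact Model.mu_le hC hθbar a
    _ = √C * n * √M.θbar := by
        rw [← Finset.mul_sum, M.sum_θ_eq_mul_θbar, Real.sqrt_div' _ hθbar.le]
        field_simp
        rw [Real.sq_sqrt hθbar.le]

variable (hcD : 0 < cD) (hdeg : ∀ a, cD * (n * M.θbar * max M.θbar (M.θ a)) ≤ M.deg a)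
include hcD hdeg

theorem abs_inv_sqrt_deg_pow_three_mul_le (hC : 0 ≤ C)
    {v : Fin n → ℝ} (hv : ∀ a, |v a| ≤ √(M.mu C a / n)) (a : Fin n) :
    |(√(M.deg a) ^ 3)⁻¹ * v a| ≤
      √(C / cD ^ 3) / (n ^ 2 * M.θbar ^ 2 * max M.θbar (M.θ a)) := by
  set m := max M.θbar (M.θ a)
  have hn : (0 : ℝ) < n := Nat.cast_pos.mpr a.pos
  have hθbar := M.θbar_pos a.pos
  have hm : 0 < m := lt_max_of_lt_left hθbar
  have hD := Model.deg_pos hcD hdeg a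
  have hv2 : v a ^ 2 ≤ C * m / M.θbar / n :=
    calc v a ^ 2 = |v a| ^ 2 := (sq_abs _).symm
      _ ≤ √(M.mu C a / n) ^ 2 := pow_le_pow_left₀ (abs_nonneg _) (hv a) 2
      _ = M.mu C a / n := Real.sq_sqrt (div_nonneg (Model.mu_nonneg hC a) hn.le)
      _ ≤ C * m / M.θbar / n := by gcongr; exact Model.mu_le hC hθbar a
  apply abs_le_of_sq_le_sq _ (by positivity)
  calc ((√(M.deg a) ^ 3)⁻¹ * v a) ^ 2 = v a ^ 2 / M.deg a ^ 3 := by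
        rw [mul_pow, inv_pow, ← pow_mul, mul_comm 3 2, pow_mul, Real.sq_sqrt hD.le,
          inv_mul_eq_div]
    _ ≤ C * m / M.θbar / n / (cD * (n * M.θbar * m)) ^ 3 := by gcongr; exact hdeg a
    _ = (√(C / cD ^ 3) / (n ^ 2 * M.θbar ^ 2 * m)) ^ 2 := by
        rw [div_pow, Real.sq_sqrt (by positivity)]
        field_simp

theorem sum_mu_mul_θ_mul_inv_deg_le (hC : 0 ≤ C) :
    ∑ a, M.mu C a * M.θ a * (M.deg a)⁻¹ ≤ C / (cD * M.θbar) := by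
  rcases n.eq_zero_or_pos with rfl | hn
  · simp [Model.θbar]
  have hθbar := M.θbar_pos hn
  have hn' : (0 : ℝ) < n := Nat.cast_pos.mpr hn
  have hterm (a : Fin n) :
      M.mu C a * M.θ a * (M.deg a)⁻¹ ≤ C / (cD * n * M.θbar ^ 2) * M.θ a := by
    have hθ := M.θ_pos a
    have hD := Model.deg_pos hcD hdeg a
    calc M.mu C a * M.θ a * (M.deg a)⁻¹
        ≤ C * max M.θbar (M.θ a) / M.θbar * M.θ a *
            (cD * (n * M.θbar * max M.θbar (M.θ a)))⁻¹ := by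
          gcongr
          · exact Model.mu_le hC hθbar a
          · exact hdeg a
      _ = C / (cD * n * M.θbar ^ 2) * M.θ a := by field_simp
  calc ∑ a, M.mu C a * M.θ a * (M.deg a)⁻¹
      ≤ ∑ a, C / (cD * n * M.θbar ^ 2) * M.θ a := Finset.sum_le_sum fun a _ => hterm a
    _ = C / (cD * M.θbar) := by rw [← Finset.mul_sum, M.sum_θ_eq_mul_θbar]; field_simp

theorem sum_erase_mu_mul_θ_mul_inv_deg_le (hC : 0 ≤ C) (i : Fin n) :
    ∑ a ∈ Finset.univ.erase i, M.mu C a * M.θ a * (M.deg a)⁻¹ ≤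
      C / (cD * √(Real.log 2)) * √(Real.log n) / M.θbar := by
  obtain rfl | hn := (Nat.succ_le_of_lt i.pos).eq_or_lt
  · simp [Subsingleton.elim i 0]
  have hθbar := M.θbar_pos i.pos
  have hlog2 : 0 < √(Real.log 2) := Real.sqrt_pos.mpr (Real.log_pos one_lt_two)
  have hlog : √(Real.log 2) ≤ √(Real.log n) :=
    Real.sqrt_le_sqrt (Real.log_le_log two_pos (by exact_mod_cast hn))
  calc ∑ a ∈ Finset.univ.erase i, M.mu C a * M.θ a * (M.deg a)⁻¹
      ≤ ∑ a, M.mu C a * M.θ a * (M.deg a)⁻¹ :=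
        Finset.sum_le_univ_sum_of_nonneg fun a =>
          mul_nonneg (mul_nonneg (Model.mu_nonneg hC a) (M.θ_pos a).le)
            (inv_nonneg.mpr (Model.deg_pos hcD hdeg a).le)
    _ ≤ C / (cD * M.θbar) := sum_mu_mul_θ_mul_inv_deg_le hcD hdeg hC
    _ = C / (cD * √(Real.log 2)) * √(Real.log 2) / M.θbar := by field_simp
    _ ≤ C / (cD * √(Real.log 2)) * √(Real.log n) / M.θbar := by gcongr

theorem sum_mul_inv_sqrt_deg_pow_three_le (hC : 0 ≤ C)
    {v : Fin n → ℝ} (hv : ∀ a, |v a| ≤ √(M.mu C a / n)) :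
    ∑ a, v a * (√(M.deg a) ^ 3)⁻¹ ≤ √(C / cD ^ 3) / (n * M.θbar ^ 3) := by
  rcases n.eq_zero_or_pos with rfl | hn
  · simp
  have hθbar := M.θbar_pos hn
  have hn' : (0 : ℝ) < n := Nat.cast_pos.mpr hn
  have hterm (a : Fin n) :
      v a * (√(M.deg a) ^ 3)⁻¹ ≤ √(C / cD ^ 3) / (n ^ 2 * M.θbar ^ 3) := by
    have hθbar_le : n ^ 2 * M.θbar ^ 3 ≤ n ^ 2 * M.θbar ^ 2 * max M.θbar (M.θ a) :=
      calc (n : ℝ) ^ 2 * M.θbar ^ 3 = n ^ 2 * M.θbar ^ 2 * M.θbar := by ring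
        _ ≤ n ^ 2 * M.θbar ^ 2 * max M.θbar (M.θ a) := by gcongr; exact le_max_left _ _
    calc v a * (√(M.deg a) ^ 3)⁻¹ ≤ |(√(M.deg a) ^ 3)⁻¹ * v a| :=
          mul_comm (v a) _ ▸ le_abs_self _
      _ ≤ √(C / cD ^ 3) / (n ^ 2 * M.θbar ^ 2 * max M.θbar (M.θ a)) :=
          abs_inv_sqrt_deg_pow_three_mul_le hcD hdeg hC hv a
      _ ≤ √(C / cD ^ 3) / (n ^ 2 * M.θbar ^ 3) :=
          div_le_div_of_nonneg_left (Real.sqrt_nonneg _) (by positivity) hθbar_le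
  calc ∑ a, v a * (√(M.deg a) ^ 3)⁻¹
      ≤ ∑ _a : Fin n, √(C / cD ^ 3) / (n ^ 2 * M.θbar ^ 3) :=
        Finset.sum_le_sum fun a _ => hterm a
    _ = √(C / cD ^ 3) / (n * M.θbar ^ 3) := by
        simp only [sum_const, card_univ, Fintype.card_fin, nsmul_eq_mul]
        field_simp

end SumBounds

theorem statement_15_general (c1 c2 c3 c4 c5 c6 c7 c8 c9 cD Cmu : ℝ)
    (hcD : 0 < cD) (hCmu : 0 < Cmu) :
    ∃ C' : ℝ, 0 < C' ∧
      ∀ (n K : ℕ) (hK : 0 < K) (M : Model n K)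
        (lam : Fin K → ℝ) (xi : Fin K → Fin n → ℝ) (lamPG eta1 : Fin K → ℝ),
        Assm M lam xi lamPG eta1 c1 c2 c3 c4 c5 c6 c7 c8 c9 →
        -- deterministic degree bounds
        (∀ a, cD * max (n * M.θbar * M.θ a) (n * M.θbar ^ 2) ≤ M.deg a) →
        -- incoherence bounds, with μ_a = Cmu θ_a² / (θ̄ (θ̄ ∨ θ_a))
        (∀ k a, |xi k a| ≤
          Real.sqrt (Cmu * M.θ a ^ 2 / (M.θbar * max M.θbar (M.θ a)) / n)) →
        ∀ k : Fin K,
          -- (i)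
          (∀ a, |(Real.sqrt (M.deg a) ^ 3)⁻¹ * xi k a| ≤
            C' / (n ^ 2 * M.θbar ^ 2 * max M.θbar (M.θ a))) ∧
          -- (ii)
          (∀ i : Fin n, ∑ a ∈ Finset.univ.erase i,
              (Cmu * M.θ a ^ 2 / (M.θbar * max M.θbar (M.θ a))) * M.θ a * (M.deg a)⁻¹ ≤
            C' * Real.sqrt (Real.log n) / M.θbar) ∧
          -- (iii)
          (∑ a, xi k a * (Real.sqrt (M.deg a) ^ 3)⁻¹ ≤ C' / (n * M.θbar ^ 3)) ∧
          -- (iv)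
          (∑ a, Real.sqrt ((Cmu * M.θ a ^ 2 / (M.θbar * max M.θbar (M.θ a))) * M.θ a ^ 2 /
              min M.θbar (M.θ a)) ≤ C' * n * Real.sqrt (M.θmax ^ 3 / M.θbar ^ 2)) ∧
          -- (v)
          (∑ a, M.θ a * Real.sqrt ((Cmu * M.θ a ^ 2 / (M.θbar * max M.θbar (M.θ a))) /
              max M.θbar (M.θ a)) ≤ C' * n * Real.sqrt M.θbar) := by
  obtain ⟨C', h1, h2, h3⟩ : ∃ C' : ℝ, √(Cmu / cD ^ 3) ≤ C' ∧
      Cmu / (cD * √(Real.log 2)) ≤ C' ∧ √Cmu ≤ C' :=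
    ⟨max (√(Cmu / cD ^ 3)) (max (Cmu / (cD * √(Real.log 2))) (√Cmu)), le_max_left _ _,
      le_max_of_le_right (le_max_left _ _), le_max_of_le_right (le_max_right _ _)⟩
  refine ⟨C', (Real.sqrt_pos.mpr hCmu).trans_le h3, ?_⟩
  intro n K _ M lam xi _ _ _ hdeg hxi k
  have hdeg' a := (M.max_mul_le_deg_iff a).1 (hdeg a)
  have hθbar := M.θbar_nonneg
  refine ⟨fun a => ?_, fun i => ?_, ?_, ?_, ?_⟩
  · exact (abs_inv_sqrt_deg_pow_three_mul_le hcD hdeg' hCmu.le (hxi k) a).trans (by gcongr)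
  · exact (sum_erase_mu_mul_θ_mul_inv_deg_le hcD hdeg' hCmu.le i).trans (by gcongr)
  · exact (sum_mul_inv_sqrt_deg_pow_three_le hcD hdeg' hCmu.le (hxi k)).trans (by gcongr)
  · exact (sum_sqrt_mu_mul_sq_div_min_le hCmu.le).trans (by gcongr)
  · exact (sum_θ_mul_sqrt_mu_div_max_le hCmu.le).trans (by gcongr)

/-- Lemma A.5: auxiliary sum bounds. -/
theorem statement_15 (c1 c2 c3 c4 c5 c6 c7 c8 c9 cD Cmu : ℝ)
    (hc1 : 0 < c1) (hc2 : 0 < c2) (hc3 : 0 < c3) (hc4 : 0 < c4) (hc5 : 0 < c5)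
    (hc6 : 0 < c6) (hc7 : 0 < c7) (hc8 : 0 < c8) (hc9 : 0 < c9)
    (hcD : 0 < cD) (hCmu : 0 < Cmu) :
    ∃ C' : ℝ, 0 < C' ∧
      ∀ (n K : ℕ) (hK : 0 < K) (M : Model n K)
        (lam : Fin K → ℝ) (xi : Fin K → Fin n → ℝ) (lamPG eta1 : Fin K → ℝ),
        Assm M lam xi lamPG eta1 c1 c2 c3 c4 c5 c6 c7 c8 c9 →
        -- deterministic degree bounds
        (∀ a, cD * max (n * M.θbar * M.θ a) (n * M.θbar ^ 2) ≤ M.deg a) →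
        -- incoherence bounds, with μ_a = Cmu θ_a² / (θ̄ (θ̄ ∨ θ_a))
        (∀ k a, |xi k a| ≤
          Real.sqrt (Cmu * M.θ a ^ 2 / (M.θbar * max M.θbar (M.θ a)) / n)) →
        ∀ k : Fin K,
          -- (i)
          (∀ a, |(Real.sqrt (M.deg a) ^ 3)⁻¹ * xi k a| ≤
            C' / (n ^ 2 * M.θbar ^ 2 * max M.θbar (M.θ a))) ∧
          -- (ii)
          (∀ i : Fin n, ∑ a ∈ Finset.univ.erase i,
              (Cmu * M.θ a ^ 2 / (M.θbar * max M.θbar (M.θ a))) * M.θ a * (M.deg a)⁻¹ ≤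
            C' * Real.sqrt (Real.log n) / M.θbar) ∧
          -- (iii)
          (∑ a, xi k a * (Real.sqrt (M.deg a) ^ 3)⁻¹ ≤ C' / (n * M.θbar ^ 3)) ∧
          -- (iv)
          (∑ a, Real.sqrt ((Cmu * M.θ a ^ 2 / (M.θbar * max M.θbar (M.θ a))) * M.θ a ^ 2 /
              min M.θbar (M.θ a)) ≤ C' * n * Real.sqrt (M.θmax ^ 3 / M.θbar ^ 2)) ∧
          -- (v)
          (∑ a, M.θ a * Real.sqrt ((Cmu * M.θ a ^ 2 / (M.θbar * max M.θbar (M.θ a))) /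
              max M.θbar (M.θ a)) ≤ C' * n * Real.sqrt M.θbar) :=
  statement_15_general c1 c2 c3 c4 c5 c6 c7 c8 c9 cD Cmu hcD hCmu
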